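/- Let W(x) := c(1+|x|)^a + 1 on ℝⁿ with c > 0 and a < 0. Then W is a nonnegative locally integrable function and W(x) ≥ 1 for all x; moreover W belongs to the reverse Hölder class B_∞, i.e., there is a constant C > 0 such that for every ball B ⊂ ℝⁿ, ess sup_{x∈B} W(x) ≤ C · (1/|B|) ∫_B W(y) dy. -/

import Mathlib

open MeasureTheory

set_option maxHeartbeats 1000000 in

theorem stmt2 (n : ℕ) (c a : ℝ) (hc : 0 < c) (ha : a < 0) :
    (∀ x : EuclideanSpace ℝ (Fin n), 0 ≤ c * (1 + ‖x‖) ^ a + 1) ∧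
    LocallyIntegrable (fun x : EuclideanSpace ℝ (Fin n) => c * (1 + ‖x‖) ^ a + 1) volume ∧
    (∀ x : EuclideanSpace ℝ (Fin n), 1 ≤ c * (1 + ‖x‖) ^ a + 1) ∧
    ∃ C : ℝ, 0 < C ∧ ∀ (z : EuclideanSpace ℝ (Fin n)) (r : ℝ), 0 < r →
      essSup (fun x : EuclideanSpace ℝ (Fin n) => c * (1 + ‖x‖) ^ a + 1)
          (volume.restrict (Metric.ball z r)) ≤
        C * ((volume (Metric.ball z r)).toReal)⁻¹ *
          ∫ y in Metric.ball z r, (c * (1 + ‖y‖) ^ a + 1) := by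
  have hpos : ∀ x : EuclideanSpace ℝ (Fin n), (0:ℝ) < (1 + ‖x‖) ^ a := by
    intro x
    exact Real.rpow_pos_of_pos (by positivity) a
  have hle1 : ∀ x : EuclideanSpace ℝ (Fin n), (1 + ‖x‖) ^ a ≤ 1 := by
    intro x
    exact Real.rpow_le_one_of_one_le_of_nonpos (by simp [norm_nonneg]) ha.le
  have hW1 : ∀ x : EuclideanSpace ℝ (Fin n), 1 ≤ c * (1 + ‖x‖) ^ a + 1 := by
    intro x; nlinarith [hpos x]
  have hWub : ∀ x : EuclideanSpace ℝ (Fin n), c * (1 + ‖x‖) ^ a + 1 ≤ c + 1 := by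
    intro x; nlinarith [hle1 x]
  have hcont : Continuous (fun x : EuclideanSpace ℝ (Fin n) => c * (1 + ‖x‖) ^ a + 1) := by
    have : Continuous (fun x : EuclideanSpace ℝ (Fin n) => (1 + ‖x‖) ^ a) :=
      Continuous.rpow_const (by continuity) (fun x => Or.inl (by positivity))
    exact ((continuous_const.mul this).add continuous_const)
  have hloc : LocallyIntegrable (fun x : EuclideanSpace ℝ (Fin n) => c * (1 + ‖x‖) ^ a + 1)
      volume := hcont.locallyIntegrable
  refine ⟨fun x => le_trans zero_le_one (hW1 x), hloc, hW1, c + 1, by linarith, ?_⟩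
  intro z r hr
  have hmeas_pos : 0 < volume (Metric.ball z r) := Metric.measure_ball_pos volume z hr
  have hmeas_lt : volume (Metric.ball z r) < ⊤ := measure_ball_lt_top
  have hreal_pos : 0 < (volume (Metric.ball z r)).toReal :=
    ENNReal.toReal_pos hmeas_pos.ne' hmeas_lt.ne
  have hint : IntegrableOn (fun x : EuclideanSpace ℝ (Fin n) => c * (1 + ‖x‖) ^ a + 1)
      (Metric.ball z r) volume :=
    (hloc.integrableOn_isCompact (isCompact_closedBall z r)).mono_set
      Metric.ball_subset_closedBall
  have hintlb : (volume (Metric.ball z r)).toReal ≤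
      ∫ y in Metric.ball z r, (c * (1 + ‖y‖) ^ a + 1) := by
    have := setIntegral_mono_on (integrableOn_const hmeas_lt.ne) hint
      measurableSet_ball (fun x _ => hW1 x)
    simp at this; exact this
  have hess : essSup (fun x : EuclideanSpace ℝ (Fin n) => c * (1 + ‖x‖) ^ a + 1)
      (volume.restrict (Metric.ball z r)) ≤ c + 1 := by
    have hne : (ae (volume.restrict (Metric.ball z r))).NeBot := by
      rw [ae_neBot, Ne, Measure.restrict_eq_zero]
      exact fun h => hmeas_pos.ne' h
    exact Filter.limsup_le_of_le
      (Filter.isCoboundedUnder_le_of_le _ (fun x => hW1 x))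
      (Filter.Eventually.of_forall hWub)
  refine hess.trans ?_
  rw [mul_assoc]
  nth_rewrite 1 [← mul_one (c + 1)]
  refine mul_le_mul_of_nonneg_left ?_ (by linarith)
  rw [← div_eq_inv_mul, le_div_iff₀ hreal_pos, one_mul]
  exact hintlb
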